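/- arXiv:math/0010180 — 2 statements merged into one kernel-verified Lean document; each statement's English description precedes it below -/
import Mathlib

section
/- For every τ in the complex upper half-plane and every t ∈ ℝ, setting τ₁ = 1 − 1/τ and τ₂ = −1/(τ − 1) (which again lie in the upper half-plane), with principal-branch complex powers one has (−iτ)^{−t} · (−iτ₁)^{−t} · (−iτ₂)^{−t} = e^{iπt/2}. -/
/-!
The three numbers `-iτ`, `-iτ₁`, `-iτ₂` lie in the right half-plane, so each argument lies in
`(-π/2, π/2)` and their sum in `(-3π/2, 3π/2)`. Their product is `-i`, so the sum of the arguments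
is `-π/2` modulo `2π`, hence exactly `-π/2`: the principal logarithms add up to `log (-i)`, and the
three principal powers multiply to `(-i)^(-t) = e^{iπt/2}`.
-/

open Complex Real

namespace Complex

lemma re_neg_I_mul (z : ℂ) : (-I * z).re = z.im := by
  simp

lemma im_neg_inv_pos {z : ℂ} (hz : 0 < z.im) : 0 < (-z⁻¹).im := by
  rw [neg_im, inv_im, neg_div, neg_neg]
  exact div_pos hz (normSq_pos.mpr fun h => by simp [h] at hz)

lemma eq_of_coe_angle_eq_of_abs_sub_lt {x y : ℝ} (h : (x : Real.Angle) = y)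
    (hxy : |x - y| < 2 * π) : x = y := by
  obtain ⟨k, hk⟩ := Real.Angle.angle_eq_iff_two_pi_dvd_sub.mp h
  rw [hk, abs_mul, abs_of_pos two_pi_pos] at hxy
  have hk0 : k = 0 := by
    have : |(k : ℝ)| < 1 := by nlinarith [two_pi_pos]
    exact Int.abs_lt_one_iff.mp (by exact_mod_cast this)
  rw [hk0, Int.cast_zero, mul_zero, sub_eq_zero] at hk
  exact hk

lemma arg_mul_mul_of_re_pos {a b c : ℂ} (ha : 0 < a.re) (hb : 0 < b.re) (hc : 0 < c.re)
    (habc : 0 ≤ (a * b * c).re) : arg (a * b * c) = arg a + arg b + arg c := by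
  have ha0 := ne_zero_of_re_pos ha
  have hb0 := ne_zero_of_re_pos hb
  have hc0 := ne_zero_of_re_pos hc
  refine eq_of_coe_angle_eq_of_abs_sub_lt ?_ ?_
  · rw [arg_mul_coe_angle (mul_ne_zero ha0 hb0) hc0, arg_mul_coe_angle ha0 hb0,
      Real.Angle.coe_add, Real.Angle.coe_add]
  · have habc' := abs_le.mp (abs_arg_le_pi_div_two_iff.mpr habc)
    have ha' := abs_lt.mp (abs_arg_lt_pi_div_two_iff.mpr (Or.inl ha))
    have hb' := abs_lt.mp (abs_arg_lt_pi_div_two_iff.mpr (Or.inl hb))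
    have hc' := abs_lt.mp (abs_arg_lt_pi_div_two_iff.mpr (Or.inl hc))
    rw [abs_lt]
    constructor <;> linarith

lemma log_mul_mul_of_re_pos {a b c : ℂ} (ha : 0 < a.re) (hb : 0 < b.re) (hc : 0 < c.re)
    (habc : 0 ≤ (a * b * c).re) : log (a * b * c) = log a + log b + log c := by
  have hnorm := fun {z : ℂ} (hz : 0 < z.re) => norm_ne_zero_iff.mpr (ne_zero_of_re_pos hz)
  apply Complex.ext
  · simp only [add_re, log_re, norm_mul]
    rw [Real.log_mul (mul_ne_zero (hnorm ha) (hnorm hb)) (hnorm hc),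
      Real.log_mul (hnorm ha) (hnorm hb)]
  · simp only [add_im, log_im]
    exact arg_mul_mul_of_re_pos ha hb hc habc

lemma mul_mul_cpow_of_re_pos {a b c : ℂ} (ha : 0 < a.re) (hb : 0 < b.re) (hc : 0 < c.re)
    (habc : 0 ≤ (a * b * c).re) (s : ℂ) : (a * b * c) ^ s = a ^ s * b ^ s * c ^ s := by
  have habc0 : a * b * c ≠ 0 :=
    mul_ne_zero (mul_ne_zero (ne_zero_of_re_pos ha) (ne_zero_of_re_pos hb)) (ne_zero_of_re_pos hc)
  rw [cpow_def_of_ne_zero habc0, cpow_def_of_ne_zero (ne_zero_of_re_pos ha),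
    cpow_def_of_ne_zero (ne_zero_of_re_pos hb), cpow_def_of_ne_zero (ne_zero_of_re_pos hc),
    log_mul_mul_of_re_pos ha hb hc habc, ← exp_add, ← exp_add, add_mul, add_mul]

lemma neg_I_cpow_neg_ofReal (t : ℝ) : (-I) ^ (-(t : ℂ)) = exp (I * π * t / 2) := by
  rw [cpow_def_of_ne_zero (neg_ne_zero.mpr I_ne_zero), log_neg_I]
  ring_nf

end Complex

/-- For `τ` in the upper half-plane, `τ₁ = 1 - 1/τ`, `τ₂ = -1/(τ-1)`, and real `t`,
with principal-branch complex powers: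
`(-iτ)^(-t) * (-iτ₁)^(-t) * (-iτ₂)^(-t) = e^{iπt/2}`. -/
theorem stmt2 (τ : ℂ) (hτ : 0 < τ.im) (t : ℝ) :
    (-Complex.I * τ) ^ (-(t : ℂ)) * (-Complex.I * (1 - 1 / τ)) ^ (-(t : ℂ)) *
      (-Complex.I * (-1 / (τ - 1))) ^ (-(t : ℂ)) =
      Complex.exp (Complex.I * Real.pi * t / 2) := by
  have hτ₀ : τ ≠ 0 := fun h => by simp [h] at hτ
  have hτ₁ : τ - 1 ≠ 0 := fun h => by simp [sub_eq_zero.mp h] at hτ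
  have h₁ : 0 < (1 - 1 / τ).im := by
    simpa [sub_eq_add_neg] using im_neg_inv_pos hτ
  have h₂ : 0 < (-1 / (τ - 1)).im := by
    simpa [neg_div] using im_neg_inv_pos (z := τ - 1) (by simpa using hτ)
  have hprod : -I * τ * (-I * (1 - 1 / τ)) * (-I * (-1 / (τ - 1))) = -I := by
    field_simp
    linear_combination I_sq
  rw [← mul_mul_cpow_of_re_pos (by rwa [re_neg_I_mul]) (by rwa [re_neg_I_mul])
    (by rwa [re_neg_I_mul]) (by rw [hprod]; simp), hprod, neg_I_cpow_neg_ofReal]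
end

section
/- Fix an integer n. For i, s ∈ ℕ define rational numbers c(n,i,s) by the polynomial identity binom(n−1+x, i) = Σ_{s=0}^{i} c(n,i,s)·x^s in ℚ[x], where binom(y,i) = y(y−1)⋯(y−i+1)/i!, and set c(n,i,s) = 0 for s > i. Let L(X) = Σ_{j≥1} (−1)^{j−1} X^j / j ∈ ℚ[[X]] be the formal power series of log(1+X). Then for every s ∈ ℕ one has the identity of formal power series Σ_{i=0}^{∞} c(n,i,s)·X^i = (1/s!) · L(X)^s · (1+X)^{n−1} in ℚ[[X]], where (1+X)^{n−1} denotes the integer power of the unit 1+X. -/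
open PowerSeries

/-- The polynomial `binom(n-1+x, i) = (n-1+x)(n-2+x)⋯(n-i+x)/i! ∈ ℚ[x]`. -/
noncomputable def binomPoly (n : ℤ) (i : ℕ) : Polynomial ℚ :=
  ((i.factorial : ℚ)⁻¹) • ∏ j ∈ Finset.range i, (Polynomial.X + Polynomial.C ((n : ℚ) - 1 - j))

/-- The coefficients `c(n,i,s)` defined by `binom(n-1+x, i) = Σ_{s} c(n,i,s) xˢ`
(automatically `0` for `s > i`). -/
noncomputable def cCoeff (n : ℤ) (i s : ℕ) : ℚ := (binomPoly n i).coeff s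

/-- The formal power series `L(X) = Σ_{j≥1} (-1)^{j-1} X^j / j` of `log(1+X)`. -/
noncomputable def Lseries : PowerSeries ℚ :=
  PowerSeries.mk fun j => if j = 0 then 0 else (-1 : ℚ) ^ (j - 1) / j

/-- The integer power `(1+X)^n` of the unit `1+X` in `ℚ[[X]]` (using the power-series
inverse for negative exponents). -/
noncomputable def onePlusXPow (n : ℤ) : PowerSeries ℚ :=
  if 0 ≤ n then (1 + PowerSeries.X) ^ n.toNat
  else ((1 + PowerSeries.X) ^ (-n).toNat)⁻¹

/-! Write `G_s = Σ_i c(n,i,s) Xⁱ` and `W = (1+X)^{n-1}`. The recursion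
`(i+1) binom(n-1+x, i+1) = (x + n-1-i) binom(n-1+x, i)`, read coefficientwise in `x`, says
`(1+X) G_s' = (n-1) G_s + G_{s-1}`. Since `(1+X) L' = 1` and `(1+X) W' = (n-1) W`, the series
`Lˢ W / s!` satisfy the same equations. A solution of `(1+X) F' = a F + E` is determined by its
constant term, so induction on `s` gives the identity. -/
namespace PowerSeries

section CommRing

variable {R : Type*} [CommRing R]

theorem coeff_one_add_X_mul_derivative (F : R⟦X⟧) (i : ℕ) :
    coeff i ((1 + X) * d⁄dX R F) = (i + 1) * coeff (i + 1) F + i * coeff i F := by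
  rw [add_mul, one_mul, map_add, coeff_derivative]
  rcases i with _ | i
  · simp [mul_comm]
  · rw [coeff_succ_X_mul, coeff_derivative]
    push_cast
    ring

theorem one_add_X_mul_derivative_one_add_X_pow (k : ℕ) :
    (1 + X) * d⁄dX R ((1 + X) ^ k) = (k : R⟦X⟧) * (1 + X) ^ k := by
  rcases k with _ | k
  · simp
  · simp only [derivative_pow, map_add, derivative_one, derivative_X, zero_add, mul_one,
      Nat.add_sub_cancel]
    ring

/-- Solutions of `(1 + X) F' = a F + E` are determined by their constant coefficient, since
comparing `X^i` coefficients gives `(i + 1) F_{i+1} = (a - i) F_i + E_i`. -/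
theorem eq_of_one_add_X_mul_derivative_eq [IsAddTorsionFree R] {a : R} {E F G : R⟦X⟧}
    (hF : (1 + X) * d⁄dX R F = C a * F + E) (hG : (1 + X) * d⁄dX R G = C a * G + E)
    (h0 : constantCoeff F = constantCoeff G) : F = G := by
  ext i
  induction i with
  | zero => simpa using h0
  | succ i ih =>
    have hFi := congrArg (coeff i) hF
    have hGi := congrArg (coeff i) hG
    simp only [coeff_one_add_X_mul_derivative, map_add, coeff_C_mul, ih] at hFi hGi
    have hsucc : (i + 1) • coeff (i + 1) F = (i + 1) • coeff (i + 1) G := by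
      simp only [nsmul_eq_mul]
      push_cast
      linear_combination hFi - hGi
    exact (nsmul_right_inj i.succ_ne_zero).mp hsucc

end CommRing

theorem mul_derivative_inv_eq_of_mul_derivative_eq {K : Type*} [Field K] {f F c : K⟦X⟧}
    (hF : constantCoeff F ≠ 0) (h : f * d⁄dX K F = c * F) : f * d⁄dX K F⁻¹ = -c * F⁻¹ := by
  rw [derivative_inv']
  linear_combination (-F⁻¹ ^ 2) * h - c * F⁻¹ * PowerSeries.inv_mul_cancel F hF

theorem mul_derivative_factorial_inv_smul_pow_succ {K : Type*} [Field K] [CharZero K]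
    {f g : K⟦X⟧} (hf : g * d⁄dX K f = 1) (s : ℕ) :
    g * d⁄dX K (((s + 1).factorial : K)⁻¹ • f ^ (s + 1)) = (s.factorial : K)⁻¹ • f ^ s := by
  have hfac : ((s + 1).factorial : K)⁻¹ * (s + 1) = (s.factorial : K)⁻¹ := by
    rw [Nat.factorial_succ]
    push_cast
    field_simp
  rw [smul_eq_C_mul, smul_eq_C_mul, Derivation.leibniz, derivative_C, smul_zero, add_zero,
    smul_eq_mul, derivative_pow, Nat.add_sub_cancel, ← hfac, map_mul, map_add, map_one,
    map_natCast]
  push_cast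
  linear_combination (C ((s + 1).factorial : K)⁻¹ * (s + 1) * f ^ s) * hf

end PowerSeries

theorem smul_binomPoly_succ (n : ℤ) (i : ℕ) :
    ((i : ℚ) + 1) • binomPoly n (i + 1) =
      (Polynomial.X + Polynomial.C ((n : ℚ) - 1 - i)) * binomPoly n i := by
  rw [binomPoly, binomPoly, smul_smul, Finset.prod_range_succ, mul_comm _ (Polynomial.X + _),
    mul_smul_comm]
  congr 2
  rw [Nat.factorial_succ]
  push_cast
  field_simp

theorem succ_mul_cCoeff_succ (n : ℤ) (i s : ℕ) :
    ((i : ℚ) + 1) * cCoeff n (i + 1) s =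
      (Polynomial.X * binomPoly n i).coeff s + ((n : ℚ) - 1 - i) * cCoeff n i s := by
  have h := congrArg (Polynomial.coeff · s) (smul_binomPoly_succ n i)
  simpa only [cCoeff, Polynomial.coeff_smul, smul_eq_mul, add_mul, Polynomial.coeff_add,
    Polynomial.coeff_C_mul] using h

theorem one_add_X_mul_derivative_mk_cCoeff (n : ℤ) (s : ℕ) :
    (1 + X) * d⁄dX ℚ (mk fun i => cCoeff n i s) =
      C ((n : ℚ) - 1) * mk (fun i => cCoeff n i s) +
        mk fun i => (Polynomial.X * binomPoly n i).coeff s := by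
  ext i
  rw [coeff_one_add_X_mul_derivative, map_add, coeff_C_mul, coeff_mk, coeff_mk, coeff_mk,
    succ_mul_cCoeff_succ]
  ring

theorem cCoeff_zero_left (n : ℤ) (s : ℕ) : cCoeff n 0 s = if s = 0 then 1 else 0 := by
  simp [cCoeff, binomPoly, Polynomial.coeff_one]

theorem constantCoeff_Lseries : constantCoeff Lseries = 0 := by
  simp [Lseries]

theorem one_add_X_mul_derivative_Lseries : (1 + X) * d⁄dX ℚ Lseries = 1 := by
  ext i
  rw [coeff_one_add_X_mul_derivative, coeff_one]
  rcases i with _ | i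
  · simp [Lseries]
  · simp only [Lseries, coeff_mk, Nat.succ_ne_zero, if_false, Nat.add_sub_cancel]
    push_cast
    field_simp
    ring

theorem constantCoeff_onePlusXPow (m : ℤ) : constantCoeff (onePlusXPow m) = 1 := by
  unfold onePlusXPow
  split_ifs <;> simp [constantCoeff_inv]

theorem one_add_X_mul_derivative_onePlusXPow (m : ℤ) :
    (1 + X) * d⁄dX ℚ (onePlusXPow m) = C (m : ℚ) * onePlusXPow m := by
  unfold onePlusXPow
  split_ifs with hm
  · lift m to ℕ using hm
    simpa using one_add_X_mul_derivative_one_add_X_pow (R := ℚ) m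
  · obtain ⟨k, rfl⟩ := Int.exists_eq_neg_ofNat (le_of_not_ge hm)
    have hk : constantCoeff ((1 + X : ℚ⟦X⟧) ^ k) ≠ 0 := by simp
    simpa using mul_derivative_inv_eq_of_mul_derivative_eq hk
      (one_add_X_mul_derivative_one_add_X_pow (R := ℚ) k)

/-- The identity `Σ_{i≥0} c(n,i,s)·Xⁱ = (1/s!)·L(X)ˢ·(1+X)^{n-1}` in `ℚ[[X]]`, used to
establish equation (2.39) of the paper. -/
theorem stmt4 (n : ℤ) (s : ℕ) :
    PowerSeries.mk (fun i => cCoeff n i s) =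
      ((s.factorial : ℚ)⁻¹) • (Lseries ^ s * onePlusXPow (n - 1)) := by
  have hW := one_add_X_mul_derivative_onePlusXPow (n - 1)
  rw [Int.cast_sub, Int.cast_one] at hW
  induction s with
  | zero =>
    simp only [pow_zero, one_mul, Nat.factorial_zero, Nat.cast_one, inv_one, one_smul]
    refine eq_of_one_add_X_mul_derivative_eq (E := 0) ?_ (by rwa [add_zero]) ?_
    · have hzero : (mk fun _ => 0 : ℚ⟦X⟧) = 0 := by ext; simp
      simpa [hzero] using one_add_X_mul_derivative_mk_cCoeff n 0
    · simp [cCoeff_zero_left, constantCoeff_onePlusXPow]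
  | succ t ih =>
    refine eq_of_one_add_X_mul_derivative_eq (a := (n : ℚ) - 1) (E := mk fun i => cCoeff n i t)
      ?_ ?_ ?_
    · simpa [cCoeff, Polynomial.coeff_X_mul] using one_add_X_mul_derivative_mk_cCoeff n (t + 1)
    · rw [ih, ← smul_mul_assoc, ← smul_mul_assoc, Derivation.leibniz, smul_eq_mul, smul_eq_mul]
      linear_combination (((t + 1).factorial : ℚ)⁻¹ • Lseries ^ (t + 1)) * hW +
        onePlusXPow (n - 1) *
          mul_derivative_factorial_inv_smul_pow_succ one_add_X_mul_derivative_Lseries t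
    · simp [cCoeff_zero_left, constantCoeff_Lseries]
end
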